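/- arXiv:1810.01533 — 2 statements merged into one kernel-verified Lean document; each statement's English description precedes it below -/
import Mathlib

section
/- For a deterministic codeword length L = ℓ (constant, so E[L] = ℓ and E[L²] = ℓ²) and arrival probability q with qℓ < 1, the average peak age is Δ^P = (ℓ² − ℓ)/(2(1/q − ℓ)) + ℓ + 1/q, and the optimal arrival rate satisfies 1/q* = sqrt((ℓ² − ℓ)/2) + ℓ with minimum peak age sqrt(2(ℓ² − ℓ)) + 2ℓ. -/
/-!
Writing `x = 1/q - ℓ > 0` for the slack of the stability condition and `a = (ℓ² - ℓ)/2`, the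
peak age is `a / x + x + 2ℓ`. By AM-GM, `a / x + x ≥ 2√a`, with equality at `x = √a`,
i.e. at `1/q = √a + ℓ`; and `2√a = √(2(ℓ² - ℓ))`.
-/

theorem Real.two_mul_sqrt_le_div_add {a x : ℝ} (ha : 0 ≤ a) (hx : 0 < x) :
    2 * √a ≤ a / x + x := by
  have hsq : √a ^ 2 = a := Real.sq_sqrt ha
  rw [div_add' _ _ _ hx.ne', le_div_iff₀ hx]
  nlinarith [sq_nonneg (√a - x)]

theorem Real.div_sqrt_add_sqrt (a : ℝ) : a / √a + √a = 2 * √a := by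
  rw [Real.div_sqrt, two_mul]

theorem Real.sqrt_two_mul_eq_two_mul_sqrt_half (b : ℝ) : √(2 * b) = 2 * √(b / 2) := by
  rw [show 2 * b = 2 ^ 2 * (b / 2) by ring, Real.sqrt_mul (by positivity),
    Real.sqrt_sq zero_le_two]

theorem peakAge_eq_div_slack_add_slack (l q : ℝ) :
    (l ^ 2 - l) / (2 * (1 / q - l)) + l + 1 / q
      = (l ^ 2 - l) / 2 / (1 / q - l) + (1 / q - l) + 2 * l := by
  rw [div_div]
  ring

/-- Geo/D/1 specialization: for deterministic codeword length ℓ ≥ 2, the peak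
age for arrival probability q with qℓ < 1 is (ℓ²−ℓ)/(2(1/q−ℓ)) + ℓ + 1/q; the
optimal arrival rate q* satisfies 1/q* = sqrt((ℓ²−ℓ)/2) + ℓ, and the minimum
peak age is sqrt(2(ℓ²−ℓ)) + 2ℓ. -/
theorem paoi_deterministic_length (l : ℝ) (hl : 2 ≤ l) :
    let Δ : ℝ → ℝ := fun q => (l ^ 2 - l) / (2 * (1 / q - l)) + l + 1 / q
    let qstar : ℝ := (Real.sqrt ((l ^ 2 - l) / 2) + l)⁻¹
    1 / qstar = Real.sqrt ((l ^ 2 - l) / 2) + l ∧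
    Δ qstar = Real.sqrt (2 * (l ^ 2 - l)) + 2 * l ∧
    (∀ q : ℝ, 0 < q → q * l < 1 → Real.sqrt (2 * (l ^ 2 - l)) + 2 * l ≤ Δ q) := by
  intro Δ qstar
  have hqstar : 1 / qstar = √((l ^ 2 - l) / 2) + l := by rw [one_div, inv_inv]
  refine ⟨hqstar, ?_, fun q hq hql => ?_⟩
  · change (l ^ 2 - l) / (2 * (1 / qstar - l)) + l + 1 / qstar = _
    rw [peakAge_eq_div_slack_add_slack, hqstar, add_sub_cancel_right,
      Real.div_sqrt_add_sqrt, Real.sqrt_two_mul_eq_two_mul_sqrt_half]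
  · have ha : 0 ≤ (l ^ 2 - l) / 2 := by nlinarith
    have hslack : 0 < 1 / q - l := by
      rw [sub_pos, lt_div_iff₀ hq]
      linarith
    change _ ≤ (l ^ 2 - l) / (2 * (1 / q - l)) + l + 1 / q
    rw [peakAge_eq_div_slack_add_slack, Real.sqrt_two_mul_eq_two_mul_sqrt_half]
    linarith [Real.two_mul_sqrt_le_div_add ha hslack]
end

section
/- For a uniform source X on n symbols (P_X(x) = 1/n) encoded with a prefix-free code, any code minimizing E[L] has codeword lengths taking at most two consecutive values ⌊log₂ n⌋ and ⌈log₂ n⌉, and for such a code E[L²] − E[L]² ≤ 1/4; consequently the peak-age formula Δ^P = (E[L²] − E[L])/(2(1/q − E[L])) + E[L] + 1/q is finite for all q < 1/⌈log₂ n⌉. -/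
/-!
For every `m : ℕ` we have `m + 2 ^ (k + 1) * 2⁻¹ ^ m ≥ k + 2`, with equality exactly for
`m ∈ {k, k + 1}` (for `m ≤ k + 1` this is `j + 1 ≤ 2 ^ j` with `j = k + 1 - m`). Summing over the
codewords and using Kraft's inequality gives `∑ ℓ ≥ n (k + 2) - 2 ^ (k + 1)`. With `k = ⌊log₂ n⌋`,
the code with `2 ^ (k + 1) - n` words of length `k` and the others of length `k + 1` attains this
bound, so an optimal code attains it as well, which forces all its lengths into `{k, k + 1}`.
Lengths confined to an interval of width one have variance at most `1 / 4` (Popoviciu), and their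
mean is at most `⌈log₂ n⌉ < 1 / q`.
-/

open Finset

theorem Nat.clog_eq_log_add_one {b n : ℕ} (hb : 1 < b) (hn : b ^ log b n < n) :
    clog b n = log b n + 1 :=
  le_antisymm (clog_le_of_le_pow (lt_pow_succ_log_self hb n).le) ((lt_clog_iff_pow_lt hb).2 hn)

theorem Nat.add_one_lt_two_pow {j : ℕ} (hj : 2 ≤ j) : j + 1 < 2 ^ j := by
  obtain ⟨i, rfl⟩ := Nat.exists_eq_add_of_le' hj
  have := i.lt_two_pow_self
  rw [pow_add]
  omega

theorem two_pow_mul_inv_two_pow {m n : ℕ} (h : m ≤ n) : (2 : ℝ) ^ n * 2⁻¹ ^ m = 2 ^ (n - m) := by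
  rw [inv_pow, pow_sub₀ _ two_ne_zero h]

theorem add_two_le_add_two_pow_mul_inv_two_pow (k m : ℕ) :
    (k + 2 : ℝ) ≤ m + 2 ^ (k + 1) * 2⁻¹ ^ m := by
  rcases le_or_gt m (k + 1) with hm | hm
  · rw [two_pow_mul_inv_two_pow hm]
    have := (k + 1 - m).lt_two_pow_self
    exact_mod_cast (by omega : k + 2 ≤ m + 2 ^ (k + 1 - m))
  · have : (k + 2 : ℝ) ≤ m := by exact_mod_cast hm
    have : (0 : ℝ) < 2 ^ (k + 1) * 2⁻¹ ^ m := by positivity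
    linarith

theorem add_two_lt_add_two_pow_mul_inv_two_pow {k m : ℕ} (hk : m ≠ k) (hk' : m ≠ k + 1) :
    (k + 2 : ℝ) < m + 2 ^ (k + 1) * 2⁻¹ ^ m := by
  rcases le_or_gt m (k + 1) with hm | hm
  · rw [two_pow_mul_inv_two_pow hm]
    have := Nat.add_one_lt_two_pow (j := k + 1 - m) (by omega)
    exact_mod_cast (by omega : k + 2 < m + 2 ^ (k + 1 - m))
  · have : (k + 2 : ℝ) ≤ m := by exact_mod_cast hm
    have : (0 : ℝ) < 2 ^ (k + 1) * 2⁻¹ ^ m := by positivity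
    linarith

/-- By the Kraft–McMillan theorem, these are exactly the length profiles of binary prefix-free
codes. -/
def SatisfiesKraft {ι : Type*} [Fintype ι] (ℓ : ι → ℕ) : Prop :=
  ∑ i, (2 : ℝ)⁻¹ ^ ℓ i ≤ 1

theorem SatisfiesKraft.eq_or_eq_succ_of_sum_le {ι : Type*} [Fintype ι] {ℓ : ι → ℕ} {k : ℕ}
    (hkraft : SatisfiesKraft ℓ)
    (hsum : ∑ i, (ℓ i : ℝ) ≤ Fintype.card ι * (k + 2 : ℝ) - 2 ^ (k + 1)) (i : ι) :
    ℓ i = k ∨ ℓ i = k + 1 := by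
  by_contra! h
  have hlt : ∑ _j : ι, (k + 2 : ℝ) < ∑ j, ((ℓ j : ℝ) + 2 ^ (k + 1) * 2⁻¹ ^ ℓ j) :=
    sum_lt_sum (fun j _ => add_two_le_add_two_pow_mul_inv_two_pow k (ℓ j))
      ⟨i, mem_univ i, add_two_lt_add_two_pow_mul_inv_two_pow h.1 h.2⟩
  rw [sum_const, card_univ, nsmul_eq_mul, sum_add_distrib, ← mul_sum] at hlt
  have : (2 : ℝ) ^ (k + 1) * ∑ j, 2⁻¹ ^ ℓ j ≤ 2 ^ (k + 1) :=
    mul_le_of_le_one_right (by positivity) hkraft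
  linarith

theorem Fin.sum_ite_val_lt {M : Type*} [AddCommMonoid M] {n a : ℕ} (ha : a ≤ n) (x y : M) :
    ∑ i : Fin n, (if (i : ℕ) < a then x else y) = a • x + (n - a) • y := by
  rw [sum_ite, Finset.sum_const, Finset.sum_const, Fin.card_filter_val_lt, min_eq_right ha,
    filter_not, card_sdiff_of_subset (filter_subset _ _), Fin.card_filter_val_lt, min_eq_right ha,
    card_univ, Fintype.card_fin]

theorem exists_satisfiesKraft_sum_eq {n k : ℕ} (h₁ : 2 ^ k ≤ n) (h₂ : n ≤ 2 ^ (k + 1)) :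
    ∃ ℓ : Fin n → ℕ, SatisfiesKraft ℓ ∧ ∑ i, (ℓ i : ℝ) = n * (k + 2 : ℝ) - 2 ^ (k + 1) := by
  set a := 2 ^ (k + 1) - n
  have ha : a ≤ n := by rw [pow_succ] at h₂; omega
  have ha' : (a : ℝ) = 2 ^ (k + 1) - n := by rw [Nat.cast_sub h₂]; push_cast; ring
  refine ⟨fun i => if (i : ℕ) < a then k else k + 1, ?_, ?_⟩
  · simp only [SatisfiesKraft, apply_ite (fun m : ℕ => (2 : ℝ)⁻¹ ^ m), Fin.sum_ite_val_lt ha,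
      nsmul_eq_mul, Nat.cast_sub ha, ha']
    have : (2 : ℝ) ^ (k + 1) * 2⁻¹ ^ (k + 1) = 1 := by rw [← mul_pow]; norm_num
    apply le_of_eq
    linear_combination this
  · simp only [apply_ite (fun m : ℕ => (m : ℝ)), Fin.sum_ite_val_lt ha, nsmul_eq_mul,
      Nat.cast_sub ha, ha']
    push_cast
    ring

def IsOptimalCode {ι : Type*} [Fintype ι] (ℓ : ι → ℕ) : Prop :=
  SatisfiesKraft ℓ ∧ ∀ ℓ' : ι → ℕ, SatisfiesKraft ℓ' → ∑ i, (ℓ i : ℝ) ≤ ∑ i, (ℓ' i : ℝ)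

namespace IsOptimalCode

variable {n : ℕ} {ℓ : Fin n → ℕ}

theorem sum_le (hℓ : IsOptimalCode ℓ) (hn : n ≠ 0) :
    ∑ i, (ℓ i : ℝ) ≤ n * (Nat.log 2 n + 2 : ℝ) - 2 ^ (Nat.log 2 n + 1) := by
  obtain ⟨ℓ', hkraft', hsum'⟩ := exists_satisfiesKraft_sum_eq (Nat.pow_log_le_self 2 hn)
    (Nat.lt_pow_succ_log_self one_lt_two n).le
  exact (hℓ.2 ℓ' hkraft').trans_eq hsum'

theorem eq_log_or_eq_clog (hℓ : IsOptimalCode ℓ) (i : Fin n) :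
    ℓ i = Nat.log 2 n ∨ ℓ i = Nat.clog 2 n := by
  set k := Nat.log 2 n
  have hsum := hℓ.sum_le i.pos.ne'
  have hmem := hℓ.1.eq_or_eq_succ_of_sum_le (k := k) (by simpa using hsum)
  obtain hpow | hpow := (Nat.pow_log_le_self 2 i.pos.ne').eq_or_lt
  · left
    by_contra hne
    have hlt : ∑ _j : Fin n, (k : ℝ) < ∑ j, (ℓ j : ℝ) := by
      refine sum_lt_sum (fun j _ => ?_) ⟨i, mem_univ i, ?_⟩
      · rcases hmem j with h | h <;> simp [h]
      · rcases hmem i with h | h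
        · exact absurd h hne
        · simp [h]
    have hpow' : (2 : ℝ) ^ k = n := by exact_mod_cast hpow
    rw [sum_const, card_univ, Fintype.card_fin, nsmul_eq_mul] at hlt
    rw [pow_succ, hpow'] at hsum
    linarith
  · rw [Nat.clog_eq_log_add_one one_lt_two hpow]
    exact hmem i

end IsOptimalCode

theorem sum_mul_sq_sub_sq_sum_mul_le {ι : Type*} (s : Finset ι) (w x : ι → ℝ) {a b : ℝ}
    (hw : ∀ i ∈ s, 0 ≤ w i) (hw₁ : ∑ i ∈ s, w i = 1) (hx : ∀ i ∈ s, x i ∈ Set.Icc a b) :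
    ∑ i ∈ s, w i * x i ^ 2 - (∑ i ∈ s, w i * x i) ^ 2 ≤ ((b - a) / 2) ^ 2 := by
  set μ := ∑ i ∈ s, w i * x i
  have hsq : ∑ i ∈ s, w i * x i ^ 2 ≤ ∑ i ∈ s, w i * ((a + b) * x i - a * b) :=
    sum_le_sum fun i hi => mul_le_mul_of_nonneg_left
      (by nlinarith [(hx i hi).1, (hx i hi).2]) (hw i hi)
  have hlin : ∑ i ∈ s, w i * ((a + b) * x i - a * b) = (a + b) * μ - a * b := by
    simp only [mul_sub, sum_sub_distrib, ← sum_mul, hw₁, mul_left_comm _ (a + b), ← mul_sum]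
    ring
  nlinarith [sq_nonneg (μ - (a + b) / 2)]

open Finset in
theorem uniform_source_optimal_code_general (n : ℕ) (ℓ : Fin n → ℕ)
    (hkraft : ∑ i, ((2:ℝ))⁻¹ ^ ℓ i ≤ 1)
    (hopt : ∀ ℓ' : Fin n → ℕ, (∑ i, ((2:ℝ))⁻¹ ^ ℓ' i ≤ 1) →
      ∑ i, (1 / (n:ℝ)) * ℓ i ≤ ∑ i, (1 / (n:ℝ)) * ℓ' i) :
    (∀ i, ℓ i = Nat.log 2 n ∨ ℓ i = Nat.clog 2 n) ∧
    (∑ i, (1 / (n:ℝ)) * (ℓ i : ℝ) ^ 2) - (∑ i, (1 / (n:ℝ)) * ℓ i) ^ 2 ≤ 1 / 4 ∧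
    (∀ q : ℝ, 0 < q → q < 1 / (Nat.clog 2 n : ℝ) →
      ∑ i, (1 / (n:ℝ)) * ℓ i < 1 / q) := by
  obtain rfl | hn := n.eq_zero_or_pos
  · simp +contextual
  have hw : ∑ _i : Fin n, 1 / (n : ℝ) = 1 := by simp [hn.ne']
  have hℓ : IsOptimalCode ℓ := ⟨hkraft, fun ℓ' h => by simpa [← mul_sum, hn] using hopt ℓ' h⟩
  have hmem := hℓ.eq_log_or_eq_clog
  have hclog := Nat.clog_le_of_le_pow (Nat.lt_pow_succ_log_self one_lt_two n).le
  have hge : ∀ i, Nat.log 2 n ≤ ℓ i := fun i => by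
    rcases hmem i with h | h <;> simp [h, Nat.log_le_clog]
  have hle : ∀ i, ℓ i ≤ Nat.clog 2 n := fun i => by
    rcases hmem i with h | h <;> simp [h, Nat.log_le_clog]
  refine ⟨hmem, ?_, fun q hq hqK => ?_⟩
  · have := sum_mul_sq_sub_sq_sum_mul_le univ (fun _ => 1 / (n : ℝ)) (fun i => (ℓ i : ℝ))
      (a := Nat.log 2 n) (b := Nat.log 2 n + 1) (fun _ _ => by positivity) hw
      fun i _ => ⟨by exact_mod_cast hge i, by exact_mod_cast (hle i).trans hclog⟩
    exact this.trans_eq (by norm_num)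
  · have hK : (0 : ℝ) < Nat.clog 2 n := one_div_pos.1 (hq.trans hqK)
    calc ∑ i, 1 / (n : ℝ) * ℓ i ≤ ∑ _i : Fin n, 1 / (n : ℝ) * Nat.clog 2 n :=
          sum_le_sum fun i _ => by gcongr; exact_mod_cast hle i
      _ = Nat.clog 2 n := by rw [← sum_mul, hw, one_mul]
      _ < 1 / q := (lt_one_div hq hK).1 hqK

open Finset in
/-- Uniform source: any prefix-free code minimizing E[L] for the uniform source
on n symbols uses only the lengths ⌊log₂ n⌋ and ⌈log₂ n⌉; for such a code the
variance satisfies E[L²] − E[L]² ≤ 1/4, and the peak age formula is finite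
(i.e. the system is stable, E[L] < 1/q) for all q < 1/⌈log₂ n⌉. -/
theorem uniform_source_optimal_code (n : ℕ) (hn : 2 ≤ n) (ℓ : Fin n → ℕ)
    (hkraft : ∑ i, ((2:ℝ))⁻¹ ^ ℓ i ≤ 1)
    (hopt : ∀ ℓ' : Fin n → ℕ, (∑ i, ((2:ℝ))⁻¹ ^ ℓ' i ≤ 1) →
      ∑ i, (1 / (n:ℝ)) * ℓ i ≤ ∑ i, (1 / (n:ℝ)) * ℓ' i) :
    (∀ i, ℓ i = Nat.log 2 n ∨ ℓ i = Nat.clog 2 n) ∧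
    (∑ i, (1 / (n:ℝ)) * (ℓ i : ℝ) ^ 2) - (∑ i, (1 / (n:ℝ)) * ℓ i) ^ 2 ≤ 1 / 4 ∧
    (∀ q : ℝ, 0 < q → q < 1 / (Nat.clog 2 n : ℝ) →
      ∑ i, (1 / (n:ℝ)) * ℓ i < 1 / q) :=
  uniform_source_optimal_code_general n ℓ hkraft hopt
end
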